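/- If h₁ ∈ H_{k₁,θ₁} and h₂ ∈ H_{k₂,θ₂} are standard majorizing kernels on R^{k₁} and R^{k₂} respectively, then h(ξ₁,ξ₂) := h₁(ξ₁) h₂(ξ₂) satisfies h*h(ξ) ≤ |ξ|^{θ₁+θ₂} h(ξ) for ξ = (ξ₁,ξ₂) ∈ W_{h₁} × W_{h₂}; i.e., the product kernel is a standard majorizing kernel of exponent θ₁+θ₂ on R^{k₁+k₂}. -/
import Mathlib


open MeasureTheory
open scoped BigOperators

/-- The product of standard majorizing kernels on `ℝ^{k₁}` and `ℝ^{k₂}`, with nonnegative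
exponents `θ₁` and `θ₂`, is a standard majorizing kernel of exponent `θ₁ + θ₂` on the
product space. -/
theorem majorizing_kernel_product
    {k₁ k₂ : ℕ}
    (W₁ : Set (EuclideanSpace ℝ (Fin k₁))) (W₂ : Set (EuclideanSpace ℝ (Fin k₂)))
    (h₁ : EuclideanSpace ℝ (Fin k₁) → ℝ) (h₂ : EuclideanSpace ℝ (Fin k₂) → ℝ)
    (θ₁ θ₂ : ℝ) (hθ₁ : 0 ≤ θ₁) (hθ₂ : 0 ≤ θ₂)
    (hpos₁ : ∀ ξ ∈ W₁, 0 < h₁ ξ) (hzero₁ : ∀ ξ ∉ W₁, h₁ ξ = 0)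
    (hmaj₁ : ∀ ξ ∈ W₁, (∫ η, h₁ (ξ - η) * h₁ η) ≤ ‖ξ‖ ^ θ₁ * h₁ ξ)
    (hpos₂ : ∀ ξ ∈ W₂, 0 < h₂ ξ) (hzero₂ : ∀ ξ ∉ W₂, h₂ ξ = 0)
    (hmaj₂ : ∀ ξ ∈ W₂, (∫ η, h₂ (ξ - η) * h₂ η) ≤ ‖ξ‖ ^ θ₂ * h₂ ξ) :
    ∀ ξ : EuclideanSpace ℝ (Fin k₁) × EuclideanSpace ℝ (Fin k₂),
      ξ.1 ∈ W₁ → ξ.2 ∈ W₂ →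
      (∫ η : EuclideanSpace ℝ (Fin k₁) × EuclideanSpace ℝ (Fin k₂),
          (h₁ (ξ.1 - η.1) * h₂ (ξ.2 - η.2)) * (h₁ η.1 * h₂ η.2)) ≤
        Real.sqrt (‖ξ.1‖ ^ 2 + ‖ξ.2‖ ^ 2) ^ (θ₁ + θ₂) * (h₁ ξ.1 * h₂ ξ.2) := by
  intro ξ hξ₁ hξ₂
  have hnn₁ : ∀ x, 0 ≤ h₁ x := fun x => by
    by_cases hx : x ∈ W₁
    · exact (hpos₁ x hx).le
    · simp [hzero₁ x hx]
  have hnn₂ : ∀ x, 0 ≤ h₂ x := fun x => by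
    by_cases hx : x ∈ W₂
    · exact (hpos₂ x hx).le
    · simp [hzero₂ x hx]
  set s := Real.sqrt (‖ξ.1‖ ^ 2 + ‖ξ.2‖ ^ 2) with hs
  have hs0 : 0 ≤ s := Real.sqrt_nonneg _
  have hs1 : ‖ξ.1‖ ≤ s := by
    have h := Real.sqrt_le_sqrt (show ‖ξ.1‖ ^ 2 ≤ ‖ξ.1‖ ^ 2 + ‖ξ.2‖ ^ 2 by
      nlinarith [sq_nonneg ‖ξ.2‖])
    rwa [Real.sqrt_sq (norm_nonneg _)] at h
  have hs2 : ‖ξ.2‖ ≤ s := by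
    have h := Real.sqrt_le_sqrt (show ‖ξ.2‖ ^ 2 ≤ ‖ξ.1‖ ^ 2 + ‖ξ.2‖ ^ 2 by
      nlinarith [sq_nonneg ‖ξ.1‖])
    rwa [Real.sqrt_sq (norm_nonneg _)] at h
  have hfac :
      (∫ η : EuclideanSpace ℝ (Fin k₁) × EuclideanSpace ℝ (Fin k₂),
          (h₁ (ξ.1 - η.1) * h₂ (ξ.2 - η.2)) * (h₁ η.1 * h₂ η.2)) =
        (∫ η₁, h₁ (ξ.1 - η₁) * h₁ η₁) * (∫ η₂, h₂ (ξ.2 - η₂) * h₂ η₂) := by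
    simp_rw [mul_mul_mul_comm]
    exact MeasureTheory.integral_prod_mul (fun η₁ => h₁ (ξ.1 - η₁) * h₁ η₁)
      (fun η₂ => h₂ (ξ.2 - η₂) * h₂ η₂)
  rw [hfac]
  have nn2 : 0 ≤ ∫ η₂, h₂ (ξ.2 - η₂) * h₂ η₂ :=
    integral_nonneg fun x => mul_nonneg (hnn₂ _) (hnn₂ _)
  calc (∫ η₁, h₁ (ξ.1 - η₁) * h₁ η₁) * (∫ η₂, h₂ (ξ.2 - η₂) * h₂ η₂)
      ≤ (‖ξ.1‖ ^ θ₁ * h₁ ξ.1) * (‖ξ.2‖ ^ θ₂ * h₂ ξ.2) := by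
        exact mul_le_mul (hmaj₁ ξ.1 hξ₁) (hmaj₂ ξ.2 hξ₂) nn2
          (mul_nonneg (Real.rpow_nonneg (norm_nonneg _) _) (hnn₁ _))
    _ ≤ (s ^ θ₁ * h₁ ξ.1) * (s ^ θ₂ * h₂ ξ.2) := by
        gcongr <;> first
          | exact hnn₁ _
          | exact hnn₂ _
          | exact mul_nonneg (Real.rpow_nonneg (norm_nonneg _) _) (hnn₂ _)
          | exact mul_nonneg (Real.rpow_nonneg hs0 _) (hnn₁ _)
    _ = s ^ (θ₁ + θ₂) * (h₁ ξ.1 * h₂ ξ.2) := by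
        rw [Real.rpow_add_of_nonneg hs0 hθ₁ hθ₂]; ring
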